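/- arXiv:1503.00426 — 4 statements merged into one kernel-verified Lean document; each statement's English description precedes it below -/
import Mathlib

section
/- If A is an M×N real matrix with Spark(A) = L+1, then for every p ∈ [0,1] and every k ≤ L, the null space constant γ(ℓ_p, A, k) is finite. -/
open Finset MeasureTheory Filter

/-- `phi p x = |x|^p`, with the convention `|x|^0 = 1` for `x ≠ 0` and `phi p 0 = 0`. -/
noncomputable def phi (p x : ℝ) : ℝ := if x = 0 then 0 else |x| ^ p

open Classical in
/-- support of a vector, as a finset -/
noncomputable def supp {n : ℕ} (z : Fin n → ℝ) : Finset (Fin n) :=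
  Finset.univ.filter (fun i => z i ≠ 0)

/-- `Spark(A) = s`: some `s` columns are linearly dependent (a kernel vector with support of
size `s`), and every nonzero kernel vector has support of size at least `s`. -/
def sparkEq {m n : ℕ} (A : Matrix (Fin m) (Fin n) ℝ) (s : ℕ) : Prop :=
  (∃ z, A.mulVec z = 0 ∧ z ≠ 0 ∧ (supp z).card = s) ∧
  (∀ z, A.mulVec z = 0 → z ≠ 0 → s ≤ (supp z).card)

/-- The set of constants `γ` satisfying the null space property inequality at level `k`. -/
def validNSC {m n : ℕ} (A : Matrix (Fin m) (Fin n) ℝ) (p : ℝ) (k : ℕ) : Set ℝ :=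
  {γ | ∀ S : Finset (Fin n), S.card ≤ k → ∀ z, A.mulVec z = 0 →
    ∑ i ∈ S, phi p (z i) ≤ γ * ∑ i ∈ Sᶜ, phi p (z i)}

/-- The null space constant `γ(ℓ_p, A, k)`: the smallest valid constant. -/
noncomputable def gammaNSC {m n : ℕ} (A : Matrix (Fin m) (Fin n) ℝ) (p : ℝ) (k : ℕ) : ℝ :=
  sInf (validNSC A p k)

/-- The ratio `θ(p, z, S)`. -/
noncomputable def theta {n : ℕ} (p : ℝ) (z : Fin n → ℝ) (S : Finset (Fin n)) : ℝ :=
  (∑ i ∈ S, phi p (z i)) / (∑ i ∈ Sᶜ, phi p (z i))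

/-!
On the kernel of `A`, a vector supported in a set `S` with `#S ≤ k < Spark(A)` vanishes, so
restriction to `Sᶜ` is injective there and, in finite dimension, `‖z‖ ≤ C ‖z|_{Sᶜ}‖_∞` with `C`
uniform over the finitely many `S`. Since `‖z|_{Sᶜ}‖_∞ ^ p` is one of the terms of
`∑_{i ∉ S} |z_i|^p`, while each of the `#S ≤ N` terms of `∑_{i ∈ S} |z_i|^p` is at most `‖z‖_∞ ^ p`,
the constant `N C^p` is valid.
-/

open scoped NNReal

lemma phi_nonneg (p x : ℝ) : 0 ≤ phi p x := by
  unfold phi; split_ifs <;> positivity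

lemma phi_le_rpow {p x r : ℝ} (hp : 0 ≤ p) (hx : |x| ≤ r) : phi p x ≤ r ^ p := by
  unfold phi
  split_ifs
  · exact Real.rpow_nonneg ((abs_nonneg x).trans hx) p
  · exact Real.rpow_le_rpow (abs_nonneg x) hx hp

lemma rpow_norm_le_sum_phi {ι : Type*} [Fintype ι] (p : ℝ) {v : ι → ℝ} (hv : v ≠ 0) :
    ‖v‖ ^ p ≤ ∑ i, phi p (v i) := by
  obtain ⟨j, -⟩ := Function.ne_iff.1 hv
  have : Nonempty ι := ⟨j⟩
  obtain ⟨⟨i, hi : ‖v i‖ = ‖v‖⟩, -⟩ := IsGreatest.pi_norm v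
  have hvi : v i ≠ 0 := by
    rw [← norm_ne_zero_iff, hi, norm_ne_zero_iff]; exact hv
  calc ‖v‖ ^ p = phi p (v i) := by rw [phi, if_neg hvi, ← hi, Real.norm_eq_abs]
    _ ≤ ∑ j, phi p (v j) := single_le_sum (fun j _ => phi_nonneg p (v j)) (mem_univ i)

theorem LinearMap.exists_norm_le_mul_norm_of_ker_inf_ker_eq_bot {𝕜 E F G : Type*}
    [NontriviallyNormedField 𝕜] [CompleteSpace 𝕜] [NormedAddCommGroup E] [NormedSpace 𝕜 E]
    [FiniteDimensional 𝕜 E] [NormedAddCommGroup F] [NormedSpace 𝕜 F] [NormedAddCommGroup G]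
    [NormedSpace 𝕜 G] (f : E →ₗ[𝕜] F) (g : E →ₗ[𝕜] G) (h : ker f ⊓ ker g = ⊥) :
    ∃ C : ℝ≥0, ∀ x ∈ ker f, ‖x‖ ≤ C * ‖g x‖ := by
  obtain ⟨C, -, hC⟩ := (f.prod g).exists_antilipschitzWith (by rwa [ker_prod])
  refine ⟨C, fun x hx => ?_⟩
  simpa [mem_ker.1 hx] using hC.le_mul_norm (map_zero _) x

lemma ker_mulVecLin_inf_ker_restrict_compl_eq_bot {m n s : ℕ} {A : Matrix (Fin m) (Fin n) ℝ}
    (hA : ∀ z, A.mulVec z = 0 → z ≠ 0 → s ≤ (supp z).card) {S : Finset (Fin n)}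
    (hS : S.card < s) :
    LinearMap.ker A.mulVecLin ⊓ LinearMap.ker (LinearMap.funLeft ℝ ℝ ((↑) : ↥Sᶜ → Fin n)) = ⊥ := by
  refine (Submodule.eq_bot_iff _).2 fun z ⟨hAz, hSz⟩ => ?_
  by_contra hz
  have hsupp : supp z ⊆ S := fun i hi => by
    by_contra hiS
    have := congrFun (LinearMap.mem_ker.1 hSz) ⟨i, mem_compl.2 hiS⟩
    simp [supp] at hi this
    exact hi this
  exact (hS.trans_le (hA z hAz hz)).not_ge (card_le_card hsupp)

lemma exists_norm_le_mul_norm_restrict_compl {m n s k : ℕ} {A : Matrix (Fin m) (Fin n) ℝ}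
    (hA : ∀ z, A.mulVec z = 0 → z ≠ 0 → s ≤ (supp z).card) (hk : k < s) :
    ∃ C : ℝ≥0, ∀ S : Finset (Fin n), S.card ≤ k → ∀ z, A.mulVec z = 0 →
      ‖z‖ ≤ C * ‖fun i : ↥Sᶜ => z i‖ := by
  have hC : ∀ S : Finset (Fin n), ∃ C : ℝ≥0, S.card ≤ k → ∀ z, A.mulVec z = 0 →
      ‖z‖ ≤ C * ‖fun i : ↥Sᶜ => z i‖ := fun S => by
    by_cases hS : S.card ≤ k
    · obtain ⟨C, hC⟩ := LinearMap.exists_norm_le_mul_norm_of_ker_inf_ker_eq_bot _ _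
        (ker_mulVecLin_inf_ker_restrict_compl_eq_bot hA (hS.trans_lt hk))
      exact ⟨C, fun _ z hz => hC z hz⟩
    · exact ⟨0, fun h => absurd h hS⟩
  choose C hC using hC
  obtain ⟨C', hC'⟩ := Finite.exists_le C
  refine ⟨C', fun S hS z hz => (hC S hS z hz).trans ?_⟩
  gcongr
  exact hC' S

/-- if Spark(A) = L+1, then for p ∈ [0,1] and k ≤ L the null space constant
is finite, i.e. some finite constant satisfies the null space property inequality. -/
theorem stmt1 {M N L : ℕ} (A : Matrix (Fin M) (Fin N) ℝ) (hspark : sparkEq A (L + 1))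
    (p : ℝ) (hp : p ∈ Set.Icc (0 : ℝ) 1) (k : ℕ) (hk : k ≤ L) :
    (validNSC A p k).Nonempty := by
  obtain ⟨C, hC⟩ := exists_norm_le_mul_norm_restrict_compl hspark.2 (Nat.lt_succ_of_le hk)
  refine ⟨N * (C : ℝ) ^ p, fun S hS z hz => ?_⟩
  rcases eq_or_ne z 0 with rfl | hz0
  · simp [phi]
  set w : ↥Sᶜ → ℝ := fun i => z i
  have hzw : ‖z‖ ≤ C * ‖w‖ := hC S hS z hz
  have hw0 : w ≠ 0 := fun hw => hz0 (norm_le_zero_iff.1 (by simpa [hw] using hzw))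
  calc ∑ i ∈ S, phi p (z i) ≤ ∑ i ∈ S, ‖z‖ ^ p :=
        sum_le_sum fun i _ => phi_le_rpow hp.1 (norm_le_pi_norm z i)
    _ ≤ N * ‖z‖ ^ p := by
        rw [sum_const, nsmul_eq_mul]
        gcongr
        simpa using card_le_univ S
    _ ≤ N * (C * ‖w‖) ^ p := by gcongr; exact hp.1
    _ = N * C ^ p * ‖w‖ ^ p := by rw [Real.mul_rpow (by positivity) (by positivity)]; ring
    _ ≤ N * C ^ p * ∑ i ∈ Sᶜ, phi p (z i) := by
        gcongr
        rw [← sum_coe_sort]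
        exact rpow_norm_le_sum_phi p hw0
end

section
/- If A has Spark(A) = L+1 and k ≤ L, then the null space constant for p = 0 equals γ(ℓ_0, A, k) = k/(L+1-k) provided N(A) contains an exactly (L+1)-sparse vector; more precisely, γ(ℓ_0, A, k) ≤ k/(L+1-k) always, and equality is attained by a suitable (L+1)-sparse vector in N(A). -/
open Finset MeasureTheory Filter

/-!
For `p = 0` the sums in the null space property count nonzero entries. A set `S` of size `k`
holds at most `k` of the at least `L + 1` nonzero entries of a nonzero kernel vector, so at least
`L + 1 - k` lie outside it. Equality is reached by a kernel vector with exactly `L + 1` nonzero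
entries and `S` chosen inside its support.
-/

lemma phi_zero_eq_ite (x : ℝ) : phi 0 x = if x ≠ 0 then 1 else 0 := by
  by_cases hx : x = 0 <;> simp [phi, hx]

lemma sum_phi_zero_eq_card_filter {n : ℕ} (z : Fin n → ℝ) (S : Finset (Fin n)) :
    ∑ i ∈ S, phi 0 (z i) = #{i ∈ S | z i ≠ 0} := by
  classical
  simp only [phi_zero_eq_ite, sum_boole]

lemma sum_phi_zero_le_card {n : ℕ} (z : Fin n → ℝ) (S : Finset (Fin n)) :
    ∑ i ∈ S, phi 0 (z i) ≤ #S := by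
  classical
  rw [sum_phi_zero_eq_card_filter]
  exact_mod_cast card_filter_le S _

lemma sum_phi_zero_of_subset_supp {n : ℕ} {z : Fin n → ℝ} {S : Finset (Fin n)}
    (hS : S ⊆ supp z) : ∑ i ∈ S, phi 0 (z i) = #S := by
  classical
  rw [sum_phi_zero_eq_card_filter, filter_true_of_mem fun i hi => by simpa [supp] using hS hi]

lemma sum_phi_zero_add_sum_compl {n : ℕ} (z : Fin n → ℝ) (S : Finset (Fin n)) :
    ∑ i ∈ S, phi 0 (z i) + ∑ i ∈ Sᶜ, phi 0 (z i) = #(supp z) := by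
  classical
  rw [sum_add_sum_compl, ← sum_phi_zero_of_subset_supp (subset_refl _), supp]
  refine (sum_subset (subset_univ _) fun i _ hi => ?_).symm
  simp_all [phi]

lemma le_div_sub_mul_of_le_add {a b k s : ℝ} (hk : 0 ≤ k) (hks : k < s) (ha : a ≤ k)
    (hs : s ≤ a + b) : a ≤ k / (s - k) * b := by
  rw [div_mul_eq_mul_div, le_div_iff₀ (sub_pos.2 hks)]
  nlinarith

section SparkNullSpaceConstant

variable {M N L : ℕ} {A : Matrix (Fin M) (Fin N) ℝ} {k : ℕ}

theorem div_mem_validNSC_zero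
    (hspark : ∀ z, A.mulVec z = 0 → z ≠ 0 → L + 1 ≤ #(supp z)) (hk : k ≤ L) :
    (k : ℝ) / ((L : ℝ) + 1 - k) ∈ validNSC A 0 k := by
  intro S hS z hz
  by_cases hz0 : z = 0
  · simp [hz0, phi]
  refine le_div_sub_mul_of_le_add (Nat.cast_nonneg k) (by norm_cast; omega)
    ((sum_phi_zero_le_card z S).trans (mod_cast hS)) ?_
  rw [sum_phi_zero_add_sum_compl]
  exact_mod_cast hspark z hz hz0

theorem div_le_of_mem_validNSC_zero (hspark : ∃ z, A.mulVec z = 0 ∧ #(supp z) = L + 1)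
    (hk : k ≤ L) {γ : ℝ}
    (hγ : γ ∈ validNSC A 0 k) : (k : ℝ) / ((L : ℝ) + 1 - k) ≤ γ := by
  obtain ⟨z, hz, hcard⟩ := hspark
  obtain ⟨S, hSsupp, hScard⟩ := exists_subset_card_eq (by omega : k ≤ #(supp z))
  have hS : ∑ i ∈ S, phi 0 (z i) = k := by rw [sum_phi_zero_of_subset_supp hSsupp, hScard]
  have hSc : ∑ i ∈ Sᶜ, phi 0 (z i) = (L : ℝ) + 1 - k := by
    have := sum_phi_zero_add_sum_compl z S
    rw [hS, hcard] at this
    push_cast at this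
    linarith
  have key := hγ S hScard.le z hz
  rw [hS, hSc] at key
  rwa [div_le_iff₀ (by linarith [show (k : ℝ) ≤ L from mod_cast hk])]

end SparkNullSpaceConstant

/-- for p = 0 and k ≤ L, γ(ℓ_0, A, k) = k / (L + 1 - k). -/
theorem stmt3 {M N L : ℕ} (A : Matrix (Fin M) (Fin N) ℝ) (hspark : sparkEq A (L + 1))
    (k : ℕ) (hk : k ≤ L) :
    gammaNSC A 0 k = (k : ℝ) / ((L : ℝ) + 1 - (k : ℝ)) := by
  obtain ⟨⟨z, hz, -, hcard⟩, hsparse⟩ := hspark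
  exact IsLeast.csInf_eq ⟨div_mem_validNSC_zero hsparse hk,
    fun _ hγ => div_le_of_mem_validNSC_zero ⟨z, hz, hcard⟩ hk hγ⟩
end

section
/- Let A ∈ ℝ^{M×N} (M < N) have columns of equal nonzero Euclidean norm and Spark(A) ≥ 3. Then γ(ℓ_1, A, 1) < 1; that is, for every nonzero z ∈ N(A) and every index i, |z_i| < ∑_{j≠i} |z_j|. -/
open Finset MeasureTheory Filter

lemma phi_one (x : ℝ) : phi 1 x = |x| := by
  unfold phi; split <;> simp [*]


lemma key_lemma {M N : ℕ} (A : Matrix (Fin M) (Fin N) ℝ) (c : ℝ) (hc : 0 < c)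
    (hcol : ∀ j : Fin N, ∑ i : Fin M, (A i j) ^ 2 = c ^ 2)
    (hspark : ∀ z : Fin N → ℝ, A.mulVec z = 0 → z ≠ 0 → 3 ≤ (supp z).card)
    (z : Fin N → ℝ) (hz : A.mulVec z = 0) (hz0 : z ≠ 0) (i : Fin N) :
    |z i| < ∑ j ∈ ({i} : Finset (Fin N))ᶜ, |z j| := by
  classical
  by_contra hcon
  push_neg at hcon
  set T : Finset (Fin N) := ({i} : Finset (Fin N))ᶜ with hT
  have hzi : z i ≠ 0 := by
    intro h0
    apply hz0
    rw [h0, abs_zero] at hcon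
    have hall := (Finset.sum_eq_zero_iff_of_nonneg (fun j _ => abs_nonneg (z j))).1
      (le_antisymm hcon (Finset.sum_nonneg fun j _ => abs_nonneg (z j)))
    funext j
    by_cases hj : j = i
    · rw [hj, h0]; rfl
    · have := hall j (by simp [hT, hj])
      simpa [abs_eq_zero] using this
  set G : Fin N → Fin N → ℝ := fun j k => ∑ r, A r j * A r k with hGdef
  have hG : ∀ j k, |G j k| ≤ c ^ 2 := by
    intro j k
    have h1 := Finset.sum_mul_sq_le_sq_mul_sq Finset.univ (fun r => A r j) (fun r => A r k)
    rw [hcol j, hcol k] at h1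
    nlinarith [abs_nonneg (G j k), sq_abs (G j k), sq_nonneg c]
  have hker : ∀ r, ∑ j ∈ T, z j * A r j = -(z i * A r i) := by
    intro r
    have h0 : ∑ j, z j * A r j = 0 := by
      have := congrFun hz r
      simpa [Matrix.mulVec, dotProduct, mul_comm] using this
    have hsplit : ∑ j ∈ ({i} : Finset (Fin N)), z j * A r j + ∑ j ∈ T, z j * A r j
        = ∑ j, z j * A r j := Finset.sum_add_sum_compl _ _
    rw [h0, Finset.sum_singleton] at hsplit
    linarith
  -- energy identity
  have hE1 : ∑ r, (∑ j ∈ T, z j * A r j) ^ 2 = ∑ j ∈ T, ∑ k ∈ T, z j * z k * G j k := by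
    simp_rw [sq, Finset.sum_mul_sum]
    rw [Finset.sum_comm]
    refine Finset.sum_congr rfl fun j _ => ?_
    rw [Finset.sum_comm]
    refine Finset.sum_congr rfl fun k _ => ?_
    rw [hGdef]
    simp only [Finset.mul_sum]
    exact Finset.sum_congr rfl fun r _ => by ring
  have hE2 : ∑ r, (∑ j ∈ T, z j * A r j) ^ 2 = z i ^ 2 * c ^ 2 := by
    simp_rw [hker, neg_sq, mul_pow, ← Finset.mul_sum, hcol i]
  -- the defect is nonpositive
  have hsumsq : (∑ j ∈ T, |z j|) ^ 2 ≤ z i ^ 2 := by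
    have h1 := pow_le_pow_left₀ (Finset.sum_nonneg fun j _ => abs_nonneg (z j)) hcon 2
    rwa [sq_abs] at h1
  have hprod : ∑ j ∈ T, ∑ k ∈ T, |z j| * |z k| * c ^ 2 = (∑ j ∈ T, |z j|) ^ 2 * c ^ 2 := by
    have hsq : (∑ j ∈ T, |z j|) ^ 2 = ∑ j ∈ T, ∑ k ∈ T, |z j| * |z k| := by
      rw [sq, Finset.sum_mul_sum]
    rw [hsq, Finset.sum_mul]
    exact Finset.sum_congr rfl fun j _ => by rw [Finset.sum_mul]
  have hterm : ∀ j ∈ T, ∀ k ∈ T, 0 ≤ |z j| * |z k| * c ^ 2 - z j * z k * G j k := by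
    intro j _ k _
    have h1 : z j * z k * G j k ≤ |z j * z k * G j k| := le_abs_self _
    have h2 : |z j * z k * G j k| = |z j| * |z k| * |G j k| := by
      rw [abs_mul, abs_mul]
    have h3 : |z j| * |z k| * |G j k| ≤ |z j| * |z k| * c ^ 2 :=
      mul_le_mul_of_nonneg_left (hG j k) (mul_nonneg (abs_nonneg _) (abs_nonneg _))
    linarith
  have hzero : ∀ j ∈ T, ∀ k ∈ T, |z j| * |z k| * c ^ 2 - z j * z k * G j k = 0 := by
    have hsle : ∑ j ∈ T, ∑ k ∈ T, (|z j| * |z k| * c ^ 2 - z j * z k * G j k) ≤ 0 := by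
      have : ∑ j ∈ T, ∑ k ∈ T, (|z j| * |z k| * c ^ 2 - z j * z k * G j k)
          = (∑ j ∈ T, ∑ k ∈ T, |z j| * |z k| * c ^ 2) - ∑ j ∈ T, ∑ k ∈ T, z j * z k * G j k := by
        rw [← Finset.sum_sub_distrib]
        exact Finset.sum_congr rfl fun j _ => by rw [← Finset.sum_sub_distrib]
      rw [this, hprod, ← hE1, hE2]
      nlinarith [sq_nonneg c]
    have hnn : ∀ j ∈ T, 0 ≤ ∑ k ∈ T, (|z j| * |z k| * c ^ 2 - z j * z k * G j k) :=
      fun j hj => Finset.sum_nonneg fun k hk => hterm j hj k hk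
    have houter := (Finset.sum_eq_zero_iff_of_nonneg hnn).1
      (le_antisymm hsle (Finset.sum_nonneg hnn))
    intro j hj k hk
    exact (Finset.sum_eq_zero_iff_of_nonneg (fun k hk => hterm j hj k hk)).1 (houter j hj) k hk
  -- pick two distinct nonzero coordinates other than i
  have hcard : 2 ≤ ((supp z).erase i).card := by
    have h3 := hspark z hz hz0
    have := Finset.card_erase_of_mem (a := i) (s := supp z) (by simp [supp, hzi])
    omega
  obtain ⟨j, hj, k, hk, hjk⟩ := Finset.one_lt_card.1 (by omega : 1 < ((supp z).erase i).card)
  have hji : j ≠ i := Finset.ne_of_mem_erase hj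
  have hki : k ≠ i := Finset.ne_of_mem_erase hk
  have hzj : z j ≠ 0 := by have := Finset.mem_of_mem_erase hj; simpa [supp] using this
  have hzk : z k ≠ 0 := by have := Finset.mem_of_mem_erase hk; simpa [supp] using this
  have hjT : j ∈ T := by simp [hT, hji]
  have hkT : k ∈ T := by simp [hT, hki]
  have heq := hzero j hjT k hkT
  set p := z j * z k with hp
  have hpne : p ≠ 0 := mul_ne_zero hzj hzk
  set ε : ℝ := if 0 < p then 1 else -1 with hε
  have hε2 : ε ^ 2 = 1 := by rw [hε]; split <;> norm_num
  have hεne : ε ≠ 0 := by rw [hε]; split <;> norm_num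
  have habsp : |p| = ε * p := by
    rw [hε]
    rcases lt_or_gt_of_ne hpne with h | h
    · rw [if_neg (by linarith), abs_of_neg h]; ring
    · rw [if_pos h, abs_of_pos h]; ring
  have hGeq : G j k = ε * c ^ 2 := by
    have h1 : p * G j k = |p| * c ^ 2 := by
      have habs : |p| = |z j| * |z k| := by rw [hp, abs_mul]
      rw [habs]; linarith [heq]
    rw [habsp] at h1
    have h2 : p * G j k = p * (ε * c ^ 2) := by linarith [h1]
    exact mul_left_cancel₀ hpne h2
  -- columns j and k are parallel
  have hcols : ∀ r, A r j = ε * A r k := by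
    have hzero2 : ∑ r, (A r j - ε * A r k) ^ 2 = 0 := by
      have hexp : ∑ r, (A r j - ε * A r k) ^ 2
          = (∑ r, (A r j) ^ 2) + ε ^ 2 * (∑ r, (A r k) ^ 2) - 2 * ε * (∑ r, A r j * A r k) := by
        rw [Finset.mul_sum, Finset.mul_sum, ← Finset.sum_add_distrib, ← Finset.sum_sub_distrib]
        exact Finset.sum_congr rfl fun r _ => by ring
      have hGsum : (∑ r, A r j * A r k) = ε * c ^ 2 := hGeq
      rw [hexp, hcol j, hcol k, hGsum]
      linear_combination (-(c ^ 2)) * hε2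
    intro r
    have := (Finset.sum_eq_zero_iff_of_nonneg fun r _ => sq_nonneg _).1 hzero2 r (Finset.mem_univ r)
    have h2 : A r j - ε * A r k = 0 := by
      exact pow_eq_zero_iff (n := 2) (by norm_num) |>.1 this
    linarith
  -- build a kernel vector of support 2
  set w : Fin N → ℝ := fun l => if l = j then 1 else if l = k then -ε else 0 with hw
  have hwk : A.mulVec w = 0 := by
    funext r
    have hsum : ∑ l, A r l * w l = ∑ l ∈ ({j, k} : Finset (Fin N)), A r l * w l := by
      symm
      apply Finset.sum_subset (Finset.subset_univ _)
      intro l _ hl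
      simp only [Finset.mem_insert, Finset.mem_singleton, not_or] at hl
      simp [hw, hl.1, hl.2]
    have hpair : ∑ l ∈ ({j, k} : Finset (Fin N)), A r l * w l = A r j * 1 + A r k * (-ε) := by
      rw [Finset.sum_pair hjk]
      simp [hw, hjk, Ne.symm hjk]
    show ∑ l, A r l * w l = 0
    rw [hsum, hpair, hcols r]
    ring
  have hwne : w ≠ 0 := by
    intro h0
    have : w j = 0 := congrFun h0 j
    simp [hw] at this
  have hsuppw : supp w = {j, k} := by
    ext l
    simp only [supp, Finset.mem_filter, Finset.mem_univ, true_and, Finset.mem_insert,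
      Finset.mem_singleton]
    constructor
    · intro hl
      by_contra hor
      push_neg at hor
      simp [hw, hor.1, hor.2] at hl
    · rintro (rfl | rfl)
      · simp [hw]
      · simp [hw, Ne.symm hjk, hεne]
  have := hspark w hwk hwne
  rw [hsuppw, Finset.card_insert_of_notMem (by simpa using hjk), Finset.card_singleton] at this
  omega

lemma gamma_aux {M N : ℕ} (hMN : M < N) (A : Matrix (Fin M) (Fin N) ℝ) (c : ℝ) (hc : 0 < c)
    (hcol : ∀ j : Fin N, ∑ i : Fin M, (A i j) ^ 2 = c ^ 2)
    (hspark : ∀ z : Fin N → ℝ, A.mulVec z = 0 → z ≠ 0 → 3 ≤ (supp z).card) :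
    gammaNSC A 1 1 < 1 := by
  classical
  have key := key_lemma A c hc hcol hspark
  -- a nonzero kernel vector exists
  have hker : ∃ z : Fin N → ℝ, z ≠ 0 ∧ A.mulVec z = 0 := by
    by_contra h
    push_neg at h
    have hinj : Function.Injective A.mulVecLin := by
      rw [← LinearMap.ker_eq_bot, LinearMap.ker_eq_bot']
      intro z hz
      by_contra hz0
      exact (h z hz0) (by simpa using hz)
    have := LinearMap.finrank_le_finrank_of_injective hinj
    simp only [Module.finrank_pi, Fintype.card_fin] at this
    omega
  obtain ⟨z₁, hz₁ne, hz₁⟩ := hker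
  have hNpos : 0 < N := lt_of_le_of_lt (Nat.zero_le M) hMN
  haveI : NeZero N := ⟨hNpos.ne'⟩
  -- total abs sum of z₁ is positive
  have habs_pos : ∀ z : Fin N → ℝ, z ≠ 0 → 0 < ∑ j, |z j| := by
    intro z hzne
    rcases Function.ne_iff.1 hzne with ⟨j, hj⟩
    exact lt_of_lt_of_le (abs_pos.2 hj)
      (Finset.single_le_sum (fun l _ => abs_nonneg (z l)) (Finset.mem_univ j))
  -- the compact set
  set K : Set (Fin N → ℝ) := {z | A.mulVec z = 0 ∧ ∑ j, |z j| = 1} with hK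
  have hKne : K.Nonempty := by
    refine ⟨(∑ j, |z₁ j|)⁻¹ • z₁, ?_, ?_⟩
    · rw [Matrix.mulVec_smul, hz₁]; simp
    · have hpos := habs_pos z₁ hz₁ne
      have : ∀ j, |((∑ j, |z₁ j|)⁻¹ • z₁) j| = (∑ j, |z₁ j|)⁻¹ * |z₁ j| := by
        intro j
        simp [abs_mul, abs_of_nonneg (inv_nonneg.2 hpos.le)]
      rw [Finset.sum_congr rfl fun j _ => this j, ← Finset.mul_sum]
      field_simp
  have hKclosed : IsClosed K := by
    have h1 : IsClosed {z : Fin N → ℝ | A.mulVec z = 0} := by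
      have : Continuous fun z : Fin N → ℝ => A.mulVec z :=
        A.mulVecLin.continuous_of_finiteDimensional
      exact isClosed_eq this continuous_const
    have h2 : IsClosed {z : Fin N → ℝ | ∑ j, |z j| = 1} := by
      have : Continuous fun z : Fin N → ℝ => ∑ j, |z j| :=
        continuous_finset_sum _ fun j _ => (continuous_apply j).abs
      exact isClosed_eq this continuous_const
    exact h1.inter h2
  have hKbdd : Bornology.IsBounded K := by
    rw [Metric.isBounded_iff_subset_closedBall 0]
    refine ⟨1, fun z hz => ?_⟩
    simp only [Metric.mem_closedBall, dist_zero_right]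
    rw [pi_norm_le_iff_of_nonneg zero_le_one]
    intro j
    calc ‖z j‖ = |z j| := rfl
      _ ≤ ∑ l, |z l| := Finset.single_le_sum (fun l _ => abs_nonneg (z l)) (Finset.mem_univ j)
      _ = 1 := hz.2
  have hKcompact : IsCompact K := Metric.isCompact_of_isClosed_isBounded hKclosed hKbdd
  obtain ⟨z₀, hz₀K, hmax⟩ := hKcompact.exists_isMaxOn hKne continuous_norm.continuousOn
  set t : ℝ := ‖z₀‖ with ht
  have ht0 : 0 ≤ t := norm_nonneg _
  -- t < 1/2
  have htlt : t < 1 / 2 := by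
    rw [ht, pi_norm_lt_iff (by norm_num : (0:ℝ) < 1/2)]
    intro i
    have hz₀ne : z₀ ≠ 0 := by
      intro h0
      have := hz₀K.2
      rw [h0] at this
      simp at this
    have hk := key z₀ hz₀K.1 hz₀ne i
    have hsplit : ∑ j ∈ ({i} : Finset (Fin N)), |z₀ j| + ∑ j ∈ ({i} : Finset (Fin N))ᶜ, |z₀ j|
        = ∑ j, |z₀ j| := Finset.sum_add_sum_compl _ _
    rw [Finset.sum_singleton, hz₀K.2] at hsplit
    calc ‖z₀ i‖ = |z₀ i| := rfl
      _ < 1/2 := by linarith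
  -- for any kernel vector, |z i| ≤ t * total
  have hbound : ∀ z : Fin N → ℝ, A.mulVec z = 0 → ∀ i, |z i| ≤ t * ∑ j, |z j| := by
    intro z hz i
    by_cases hzne : z = 0
    · simp [hzne]
    · have hpos := habs_pos z hzne
      set u : Fin N → ℝ := (∑ j, |z j|)⁻¹ • z with hu
      have huK : u ∈ K := by
        constructor
        · rw [hu, Matrix.mulVec_smul, hz]; simp
        · have : ∀ j, |u j| = (∑ j, |z j|)⁻¹ * |z j| := by
            intro j
            simp [hu, abs_mul, abs_of_nonneg (inv_nonneg.2 hpos.le)]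
          rw [Finset.sum_congr rfl fun j _ => this j, ← Finset.mul_sum]
          field_simp
      have h1 : ‖u‖ ≤ t := hmax huK
      have h2 : |u i| ≤ t := le_trans (by
        calc |u i| = ‖u i‖ := rfl
          _ ≤ ‖u‖ := norm_le_pi_norm u i) h1
      have h3 : |u i| = (∑ j, |z j|)⁻¹ * |z i| := by
        simp [hu, abs_mul, abs_of_nonneg (inv_nonneg.2 hpos.le)]
      rw [h3] at h2
      calc |z i| = (∑ j, |z j|) * ((∑ j, |z j|)⁻¹ * |z i|) := by field_simp
        _ ≤ (∑ j, |z j|) * t := by exact mul_le_mul_of_nonneg_left h2 hpos.le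
        _ = t * ∑ j, |z j| := mul_comm _ _
  -- γ := t / (1 - t)
  set γ : ℝ := t / (1 - t) with hγ
  have h1t : 0 < 1 - t := by linarith
  have hγ0 : 0 ≤ γ := div_nonneg ht0 h1t.le
  have hγlt : γ < 1 := by
    rw [hγ, div_lt_one h1t]; linarith
  have hγmem : γ ∈ validNSC A 1 1 := by
    intro S hS z hz
    simp only [phi_one]
    rcases Finset.eq_empty_or_nonempty S with rfl | hSne
    · simp
      exact mul_nonneg hγ0 (Finset.sum_nonneg fun j _ => abs_nonneg (z j))
    · obtain ⟨i, rfl⟩ := Finset.card_eq_one.1 (le_antisymm hS hSne.card_pos)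
      rw [Finset.sum_singleton]
      have hb := hbound z hz i
      have hsplit : |z i| + ∑ j ∈ ({i} : Finset (Fin N))ᶜ, |z j| = ∑ j, |z j| := by
        have := Finset.sum_add_sum_compl ({i} : Finset (Fin N)) (fun j => |z j|)
        rwa [Finset.sum_singleton] at this
      set R : ℝ := ∑ j ∈ ({i} : Finset (Fin N))ᶜ, |z j| with hR
      have hb2 : |z i| ≤ t * (|z i| + R) := by rw [hsplit]; exact hb
      rw [hγ, div_mul_eq_mul_div, le_div_iff₀ h1t]
      nlinarith
  calc gammaNSC A 1 1 ≤ γ := by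
        apply csInf_le
        · refine ⟨0, fun γ' hγ' => ?_⟩
          have := hγ' ∅ (by simp) z₁ hz₁
          simp only [phi_one, Finset.sum_empty, Finset.compl_empty] at this
          by_contra hneg
          push_neg at hneg
          nlinarith [habs_pos z₁ hz₁ne]
        · exact hγmem
    _ < 1 := hγlt

/-- for A with equal nonzero column norms and Spark(A) ≥ 3, γ(ℓ_1,A,1) < 1;
that is, |z_i| < ∑_{j ≠ i} |z_j| for every nonzero z in the null space. -/
theorem stmt11 {M N : ℕ} (hMN : M < N) (A : Matrix (Fin M) (Fin N) ℝ) (c : ℝ) (hc : 0 < c)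
    (hcol : ∀ j : Fin N, ∑ i : Fin M, (A i j) ^ 2 = c ^ 2)
    (hspark : ∀ z : Fin N → ℝ, A.mulVec z = 0 → z ≠ 0 → 3 ≤ (supp z).card) :
    gammaNSC A 1 1 < 1 ∧
      ∀ z : Fin N → ℝ, A.mulVec z = 0 → z ≠ 0 →
        ∀ i : Fin N, |z i| < ∑ j ∈ ({i} : Finset (Fin N))ᶜ, |z j| := by
  refine ⟨gamma_aux hMN A c hc hcol hspark, fun z hz hz0 i => key_lemma A c hc hcol hspark z hz hz0 i⟩
end

section
/- For any nonzero vector z ∈ ℝ^N with support T, any S' ⊆ T, and exponents 0 ≤ p < q ≤ 1 such that |z_i| ≥ |z_l| for all i ∈ S' and l ∈ T\S' with T\S' nonempty, one has θ(p,z,S') ≤ θ(q,z,S'), with equality if and only if all nonzero entries of z have the same magnitude. -/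
open Finset MeasureTheory Filter

/-- if S' (nonempty) consists of largest-magnitude entries of z within its
support T, T \ S' is nonempty, and 0 ≤ p < q ≤ 1, then θ(p,z,S') ≤ θ(q,z,S'), with
equality iff all nonzero entries of z have the same magnitude. -/
theorem stmt12 {N : ℕ} (z : Fin N → ℝ) (hz : z ≠ 0) (S' : Finset (Fin N))
    (hS'T : S' ⊆ supp z) (hS'ne : S'.Nonempty) (hTS' : (supp z \ S').Nonempty)
    (hmax : ∀ i ∈ S', ∀ l ∈ supp z \ S', |z l| ≤ |z i|)
    (p q : ℝ) (hp : 0 ≤ p) (hpq : p < q) (hq : q ≤ 1) :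
    theta p z S' ≤ theta q z S' ∧
      (theta p z S' = theta q z S' ↔
        ∀ i ∈ supp z, ∀ j ∈ supp z, |z i| = |z j|) := by
  classical
  obtain ⟨i₀, hi₀⟩ := hS'ne
  obtain ⟨l₀, hl₀⟩ := hTS'
  have hmem : ∀ i ∈ supp z, z i ≠ 0 := fun i hi => (Finset.mem_filter.mp hi).2
  have habs : ∀ i ∈ supp z, 0 < |z i| := fun i hi => abs_pos.mpr (hmem i hi)
  have hsum1 : ∀ r : ℝ, ∑ i ∈ S', phi r (z i) = ∑ i ∈ S', |z i| ^ r := by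
    intro r
    refine Finset.sum_congr rfl fun i hi => ?_
    simp [phi, hmem i (hS'T hi)]
  have hsub : supp z \ S' ⊆ S'ᶜ := by
    intro l hl
    simp only [Finset.mem_compl]
    exact (Finset.mem_sdiff.mp hl).2
  have hsum2 : ∀ r : ℝ, ∑ i ∈ S'ᶜ, phi r (z i) = ∑ l ∈ supp z \ S', |z l| ^ r := by
    intro r
    rw [← Finset.sum_subset hsub ?_]
    · refine Finset.sum_congr rfl fun l hl => ?_
      simp [phi, hmem l (Finset.mem_sdiff.mp hl).1]
    · intro l hl hnl
      have hz0 : z l = 0 := by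
        by_contra h
        exact hnl (Finset.mem_sdiff.mpr ⟨Finset.mem_filter.mpr ⟨Finset.mem_univ l, h⟩,
          Finset.mem_compl.mp hl⟩)
      simp [phi, hz0]
  have hA : ∀ r : ℝ, 0 < ∑ i ∈ S', |z i| ^ r := fun r =>
    Finset.sum_pos (fun i hi => Real.rpow_pos_of_pos (habs i (hS'T hi)) r) ⟨i₀, hi₀⟩
  have hB : ∀ r : ℝ, 0 < ∑ l ∈ supp z \ S', |z l| ^ r := fun r =>
    Finset.sum_pos (fun l hl => Real.rpow_pos_of_pos (habs l (Finset.mem_sdiff.mp hl).1) r)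
      ⟨l₀, hl₀⟩
  have hqp : (0:ℝ) < q - p := by linarith
  -- termwise inequality
  have hterm_le : ∀ i ∈ S', ∀ l ∈ supp z \ S',
      |z i| ^ p * |z l| ^ q ≤ |z i| ^ q * |z l| ^ p := by
    intro i hi l hl
    have ha : 0 < |z i| := habs i (hS'T hi)
    have hb : 0 < |z l| := habs l (Finset.mem_sdiff.mp hl).1
    have hba : |z l| ≤ |z i| := hmax i hi l hl
    have hsplit : ∀ x : ℝ, 0 < x → x ^ q = x ^ p * x ^ (q - p) := by
      intro x hx
      rw [← Real.rpow_add hx]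
      ring_nf
    have h2 : |z l| ^ (q - p) ≤ |z i| ^ (q - p) := Real.rpow_le_rpow hb.le hba hqp.le
    rw [hsplit _ ha, hsplit _ hb]
    have hpos : 0 ≤ |z i| ^ p * |z l| ^ p :=
      mul_nonneg (Real.rpow_nonneg ha.le p) (Real.rpow_nonneg hb.le p)
    nlinarith [h2, hpos]
  have hterm_lt : ∀ i ∈ S', ∀ l ∈ supp z \ S', |z l| < |z i| →
      |z i| ^ p * |z l| ^ q < |z i| ^ q * |z l| ^ p := by
    intro i hi l hl hba
    have ha : 0 < |z i| := habs i (hS'T hi)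
    have hb : 0 < |z l| := habs l (Finset.mem_sdiff.mp hl).1
    have hsplit : ∀ x : ℝ, 0 < x → x ^ q = x ^ p * x ^ (q - p) := by
      intro x hx
      rw [← Real.rpow_add hx]
      ring_nf
    have h2 : |z l| ^ (q - p) < |z i| ^ (q - p) := Real.rpow_lt_rpow hb.le hba hqp
    rw [hsplit _ ha, hsplit _ hb]
    have hpos : 0 < |z i| ^ p * |z l| ^ p :=
      mul_pos (Real.rpow_pos_of_pos ha p) (Real.rpow_pos_of_pos hb p)
    nlinarith [h2, hpos]
  -- key cross-product inequality and equality characterization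
  have hrwA : (∑ i ∈ S', |z i| ^ p) * (∑ l ∈ supp z \ S', |z l| ^ q)
      = ∑ i ∈ S', ∑ l ∈ supp z \ S', |z i| ^ p * |z l| ^ q := by
    rw [Finset.sum_mul_sum]
  have hrwB : (∑ i ∈ S', |z i| ^ q) * (∑ l ∈ supp z \ S', |z l| ^ p)
      = ∑ i ∈ S', ∑ l ∈ supp z \ S', |z i| ^ q * |z l| ^ p := by
    rw [Finset.sum_mul_sum]
  have key_le : (∑ i ∈ S', |z i| ^ p) * (∑ l ∈ supp z \ S', |z l| ^ q)
      ≤ (∑ i ∈ S', |z i| ^ q) * (∑ l ∈ supp z \ S', |z l| ^ p) := by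
    rw [hrwA, hrwB]
    refine Finset.sum_le_sum fun i hi => Finset.sum_le_sum fun l hl => hterm_le i hi l hl
  have htheta : ∀ r : ℝ, theta r z S'
      = (∑ i ∈ S', |z i| ^ r) / (∑ l ∈ supp z \ S', |z l| ^ r) := by
    intro r
    rw [theta, hsum1, hsum2]
  have hle : theta p z S' ≤ theta q z S' := by
    rw [htheta, htheta, div_le_div_iff₀ (hB p) (hB q)]
    exact key_le
  refine ⟨hle, ?_⟩
  constructor
  · intro heq
    -- derive cross-product equality
    have hxeq : (∑ i ∈ S', |z i| ^ p) * (∑ l ∈ supp z \ S', |z l| ^ q)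
        = (∑ i ∈ S', |z i| ^ q) * (∑ l ∈ supp z \ S', |z l| ^ p) := by
      rw [htheta, htheta] at heq
      exact (div_eq_div_iff (hB p).ne' (hB q).ne').mp heq
    -- all pairs have equal magnitude
    have hpair : ∀ i ∈ S', ∀ l ∈ supp z \ S', |z l| = |z i| := by
      by_contra hcon
      push_neg at hcon
      obtain ⟨i, hi, l, hl, hne⟩ := hcon
      have hlt : |z l| < |z i| := lt_of_le_of_ne (hmax i hi l hl) hne
      have : (∑ i ∈ S', ∑ l ∈ supp z \ S', |z i| ^ p * |z l| ^ q)
          < ∑ i ∈ S', ∑ l ∈ supp z \ S', |z i| ^ q * |z l| ^ p := by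
        refine Finset.sum_lt_sum (fun j hj => Finset.sum_le_sum fun m hm => hterm_le j hj m hm)
          ⟨i, hi, ?_⟩
        exact Finset.sum_lt_sum (fun m hm => hterm_le i hi m hm) ⟨l, hl, hterm_lt i hi l hl hlt⟩
      rw [hrwA, hrwB] at hxeq
      exact absurd hxeq this.ne
    intro i hi j hj
    have hval : ∀ k ∈ supp z, |z k| = |z i₀| := by
      intro k hk
      by_cases hkS : k ∈ S'
      · rw [← hpair k hkS l₀ hl₀, hpair i₀ hi₀ l₀ hl₀]
      · exact hpair i₀ hi₀ k (Finset.mem_sdiff.mpr ⟨hk, hkS⟩)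
    rw [hval i hi, hval j hj]
  · intro hall
    have hpair : ∀ i ∈ S', ∀ l ∈ supp z \ S', |z l| = |z i| := fun i hi l hl =>
      hall l (Finset.mem_sdiff.mp hl).1 i (hS'T hi)
    rw [htheta, htheta]
    rw [div_eq_div_iff (hB p).ne' (hB q).ne', hrwA, hrwB]
    refine Finset.sum_congr rfl fun i hi => Finset.sum_congr rfl fun l hl => ?_
    rw [hpair i hi l hl]
    have ha : 0 < |z i| := habs i (hS'T hi)
    rw [← Real.rpow_add ha, ← Real.rpow_add ha, add_comm]
end
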